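/- For all a ∈ F_{3^n}^×, the order of the elliptic curve E: y² = x³ + x² − a over F_{3^n} is divisible by 3; equivalently the Kloosterman sum satisfies K_{3^n}(a) ≡ 0 (mod 3). -/

import Mathlib

open WeierstrassCurve

/-- The curve `y² = x³ + x² - a` over a field. -/
noncomputable def E3 {F : Type*} [Field F] (a : F) : WeierstrassCurve.Affine F :=
  { a₁ := 0, a₂ := 1, a₃ := 0, a₄ := 0, a₆ := -a }

open scoped Classical in
/-- The Kloosterman sum `K_{3^n}(a) = 1 + ∑_{x ∈ 𝔽_{3^n}^×} ζ^{Tr(x⁻¹ + ax)}`. -/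
noncomputable def Kl3 (n : ℕ) (ζ : ℂ) (a : GaloisField 3 n) : ℂ :=
  letI : Fintype (GaloisField 3 n) := Fintype.ofFinite _
  1 + ∑ x ∈ Finset.univ \ {(0 : GaloisField 3 n)},
    ζ ^ (Algebra.trace (ZMod 3) (GaloisField 3 n) (x⁻¹ + a * x)).val

/-! In characteristic `3`, write `a = c³`. The tangent to `y² = x³ + x² - a` at `P = (c, c)` has
slope `(3c² + 2c) / 2c = 1`, i.e. it is the line `y = x`, which meets the curve where
`x³ - c³ = (x - c)³ = 0`. So `P` is a flex: `2P = -P`, `P` has order `3`, and `3` divides the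
group order. Since `n > 0`, the Kloosterman sum `#E(a) - 3ⁿ` is then divisible by `3` too. -/

lemma E3_negY {F : Type*} [Field F] (a x y : F) : (E3 a).negY x y = -y := by
  simp [Affine.negY, E3]

section CharThree

variable {F : Type*} [Field F] [CharP F 3] {c : F}

lemma E3_nonsingular_self (hc : c ≠ 0) : (E3 (c ^ 3)).Nonsingular c c := by
  have h3 : (3 : F) = 0 := CharP.ofNat_eq_zero F 3
  rw [Affine.nonsingular_iff, Affine.equation_iff]
  refine ⟨by simp only [E3]; ring, Or.inl fun h => hc ?_⟩
  simp only [E3] at h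
  linear_combination h + (c ^ 2 + c) * h3

variable [DecidableEq F]

lemma E3_slope_self (hc : c ≠ 0) : (E3 (c ^ 3)).slope c c c c = 1 := by
  have h3 : (3 : F) = 0 := CharP.ofNat_eq_zero F 3
  have h2c : (2 : F) * c ≠ 0 := by
    rwa [show (2 : F) * c = -c by linear_combination c * h3, neg_ne_zero]
  rw [Affine.slope_of_Y_ne rfl (by rw [E3_negY]; intro h; exact h2c (by linear_combination h)),
    E3_negY, div_eq_one_iff_eq (by rwa [sub_neg_eq_add, ← two_mul])]
  simp only [E3]
  linear_combination c ^ 2 * h3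

noncomputable def E3.cubeRootPoint (hc : c ≠ 0) : (E3 (c ^ 3)).Point :=
  .some c c (E3_nonsingular_self hc)

lemma E3.cubeRootPoint_add_self (hc : c ≠ 0) :
    cubeRootPoint hc + cubeRootPoint hc = -cubeRootPoint hc := by
  have h3 : (3 : F) = 0 := CharP.ofNat_eq_zero F 3
  have hy : c ≠ (E3 (c ^ 3)).negY c c := by
    rw [E3_negY]
    intro h
    exact hc (by linear_combination c * h3 - h)
  rw [cubeRootPoint, Affine.Point.add_self_of_Y_ne' hy, neg_inj, Affine.Point.some.injEq,
    Affine.negAddY, Affine.addX, E3_slope_self hc]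
  simp only [E3]
  constructor <;> linear_combination (-c) * h3

lemma E3.addOrderOf_cubeRootPoint (hc : c ≠ 0) : addOrderOf (cubeRootPoint hc) = 3 := by
  have : Fact (Nat.Prime 3) := ⟨Nat.prime_three⟩
  refine addOrderOf_eq_prime ?_ (Affine.Point.some_ne_zero _)
  rw [succ_nsmul, two_nsmul, cubeRootPoint_add_self, neg_add_cancel]

end CharThree

theorem E3_three_dvd_natCard {F : Type*} [Field F] [CharP F 3] [PerfectRing F 3] {a : F}
    (ha : a ≠ 0) : 3 ∣ Nat.card (E3 a).Point := by
  classical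
  obtain ⟨c, rfl⟩ : ∃ c : F, c ^ 3 = a := surjective_frobenius F 3 a
  have hc : c ≠ 0 := by rintro rfl; simp at ha
  simpa [E3.addOrderOf_cubeRootPoint hc] using addOrderOf_dvd_natCard (E3.cubeRootPoint hc)

lemma exists_int_eq_mul_of_natCast_eq_pow_add {R : Type*} [CommRing R] {p n N : ℕ} {K : R}
    (hn : 0 < n) (hN : (N : R) = p ^ n + K) (hp : p ∣ N) : ∃ k : ℤ, K = p * k := by
  obtain ⟨m, rfl⟩ := hp
  refine ⟨m - p ^ (n - 1), ?_⟩
  obtain ⟨n, rfl⟩ := Nat.exists_eq_add_of_lt hn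
  simp only [Nat.zero_add, Nat.add_sub_cancel, push_cast] at hN ⊢
  linear_combination -hN

theorem curve_order_div_three_general (n : ℕ) (hn : 0 < n) (a : GaloisField 3 n) (ha : a ≠ 0)
    (ζ : ℂ)
    (hcard : (Nat.card (E3 a).Point : ℂ) = (3 : ℂ) ^ n + Kl3 n ζ a) :
    3 ∣ Nat.card (E3 a).Point ∧ ∃ k : ℤ, Kl3 n ζ a = 3 * (k : ℂ) := by
  have hdvd := E3_three_dvd_natCard ha
  exact ⟨hdvd, by exact_mod_cast exists_int_eq_mul_of_natCast_eq_pow_add hn hcard hdvd⟩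

/-- For all `a ∈ 𝔽_{3^n}ˣ`, the order of `E : y² = x³ + x² - a` over
`𝔽_{3^n}` is divisible by 3; equivalently `K_{3^n}(a) ≡ 0 (mod 3)`. -/
theorem curve_order_div_three (n : ℕ) (hn : 0 < n) (a : GaloisField 3 n) (ha : a ≠ 0)
    (ζ : ℂ) (hζ : IsPrimitiveRoot ζ 3)
    (hcard : (Nat.card (E3 a).Point : ℂ) = (3 : ℂ) ^ n + Kl3 n ζ a) :
    3 ∣ Nat.card (E3 a).Point ∧ ∃ k : ℤ, Kl3 n ζ a = 3 * (k : ℂ) :=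
  curve_order_div_three_general n hn a ha ζ hcard
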